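/- Let G = V^t ⋊ H be a finite solvable group with V a faithful irreducible H-module, and let M₁ = W₁H^{v₁}, …, M_n = W_nH^{v_n} be maximal subgroups of G supplementing V^t (W_i maximal H-submodules of V^t, v_i ∈ V^t). Then ⋂_{i=1}^n M_i = U·C_{H*}(Z), where U = ⋂_{i=1}^n W_i, H* is a conjugate of H in G, and Z is an End_H(V)-subspace of V (identifying V diagonally). -/

import Mathlib

namespace PaperSDP

variable {V H : Type*} [AddCommGroup V] [Group H] [DistribMulAction H V] {t : ℕ}

/-- The diagonal action of `H` on `V^t`, as a homomorphism into the
(multiplicatively written) automorphism group of `V^t`. -/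
def phi (V : Type*) [AddCommGroup V] (H : Type*) [Group H] [DistribMulAction H V]
    (t : ℕ) : H →* MulAut (Multiplicative (Fin t → V)) where
  toFun h := AddEquiv.toMultiplicative (DistribMulAction.toAddAut H (Fin t → V) h)
  map_one' := by ext v; simp
  map_mul' h₁ h₂ := by ext v; simp [mul_smul]

/-- The semidirect product `G = V^t ⋊ H` with diagonal action. -/
abbrev SDP (V : Type*) [AddCommGroup V] (H : Type*) [Group H] [DistribMulAction H V]
    (t : ℕ) : Type _ :=
  (Multiplicative (Fin t → V)) ⋊[phi V H t] H

/-- The copy of `V^t` inside `G`. -/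
def VtG (V : Type*) [AddCommGroup V] (H : Type*) [Group H] [DistribMulAction H V]
    (t : ℕ) : Subgroup (SDP V H t) :=
  (SemidirectProduct.inl : Multiplicative (Fin t → V) →* SDP V H t).range

/-- The image in `G` of an additive subgroup `W` of `V^t`. -/
def subG (W : AddSubgroup (Fin t → V)) : Subgroup (SDP V H t) :=
  (AddSubgroup.toSubgroup W).map
    (SemidirectProduct.inl : Multiplicative (Fin t → V) →* SDP V H t)

/-- The element of `G` corresponding to `v ∈ V^t`. -/
def elemG (v : Fin t → V) : SDP V H t :=
  SemidirectProduct.inl (Multiplicative.ofAdd v)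

/-- The conjugate `K^v = v⁻¹ K v` of a subgroup `K ≤ G` by an element `v ∈ V^t`. -/
def conjG (K : Subgroup (SDP V H t)) (v : Fin t → V) : Subgroup (SDP V H t) :=
  K.map (MulAut.conj (elemG v)⁻¹).toMonoidHom

/-- The copy `H^v` of `H` in `G`, conjugated by `v ∈ V^t`. -/
def HG (V : Type*) [AddCommGroup V] (H : Type*) [Group H] [DistribMulAction H V]
    (t : ℕ) (v : Fin t → V) : Subgroup (SDP V H t) :=
  conjG (SemidirectProduct.inr : H →* SDP V H t).range v

/-- `W` is an `H`-submodule of `V^t` (an `H`-invariant additive subgroup). -/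
def IsHSub (H : Type*) [Group H] [DistribMulAction H V]
    (W : AddSubgroup (Fin t → V)) : Prop :=
  ∀ (h : H) (w : Fin t → V), w ∈ W → h • w ∈ W

/-- `W` is a maximal `H`-submodule of `V^t`. -/
def IsMaxHSub (H : Type*) [Group H] [DistribMulAction H V]
    (W : AddSubgroup (Fin t → V)) : Prop :=
  IsHSub H W ∧ W ≠ ⊤ ∧ ∀ W' : AddSubgroup (Fin t → V), IsHSub H W' → W < W' → W' = ⊤

/-- The action of `H` on `V` is (faithful and) irreducible. -/
def IsIrreducible (H : Type*) [Group H] (V : Type*) [AddCommGroup V]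
    [DistribMulAction H V] : Prop :=
  (⊥ : AddSubgroup V) ≠ ⊤ ∧
    ∀ W : AddSubgroup V, (∀ (h : H) (w : V), w ∈ W → h • w ∈ W) → W = ⊥ ∨ W = ⊤

/-- The action of `H` on `V` is faithful. -/
def IsFaithful (H : Type*) [Group H] (V : Type*) [AddCommGroup V]
    [DistribMulAction H V] : Prop :=
  ∀ h : H, (∀ v : V, h • v = v) → h = 1

/-- An `End_H(V)`-subspace of `V`: an additive subgroup stable under all
`H`-equivariant additive endomorphisms of `V`. -/
def IsFSub (H : Type*) [Group H] (V : Type*) [AddCommGroup V] [DistribMulAction H V]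
    (Z : AddSubgroup V) : Prop :=
  ∀ f : V →+ V, (∀ (h : H) (v : V), f (h • v) = h • f v) → ∀ z ∈ Z, f z ∈ Z

/-- The centralizer `C_{H*}(Z)` of a subset `Z ⊆ V` (embedded diagonally in `V^t`)
in the conjugate `H* = H^g` of `H`, inside `G`. -/
def CHstar (g : SDP V H t) (Z : AddSubgroup V) : Subgroup (SDP V H t) :=
  ((SemidirectProduct.inr : H →* SDP V H t).range.map (MulAut.conj g).toMonoidHom) ⊓
    Subgroup.centralizer ((fun z : V => elemG (H := H) (fun _ : Fin t => z)) '' Z)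

end PaperSDP

open PaperSDP

/-!
Each maximal submodule `Wᵢ` of `V^t` is the kernel of an `H`-map `λᵢ : V^t → V`, and then
`Wᵢ H^{vᵢ}` consists of the `(x, h)` with `λᵢ x = h zᵢ - zᵢ`, where `zᵢ = λᵢ vᵢ`. By Schur's
lemma `F = End_H(V)` is a division ring, and each `λᵢ` is a row of a matrix over `F`. Let `Z` be
the set of values `∑ aᵢ zᵢ` of the left `F`-relations `∑ aᵢ λᵢ = 0`. If `(x, h)` lies in every
`Mᵢ`, applying a relation shows that `h` fixes `Z`. Conversely, the linear system `λᵢ u = zᵢ`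
modulo the fixed points of `C_H(Z)` is solvable, because its compatibility conditions are exactly
the relations; such a `u` gives `h zᵢ - zᵢ = λᵢ (h u - u)` for all `h ∈ C_H(Z)`, so the
intersection is `U · C_{H^u}(Z)`.
-/

section LinearAlgebra

variable {F M : Type*} [DivisionRing F] [AddCommGroup M] [Module F M]

theorem LinearMap.exists_comp_eq_of_ker_le {A B : Type*} [AddCommGroup A] [Module F A]
    [AddCommGroup B] [Module F B] (f : A →ₗ[F] B) (g : A →ₗ[F] M)
    (h : LinearMap.ker f ≤ LinearMap.ker g) : ∃ ψ : B →ₗ[F] M, ψ ∘ₗ f = g := by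
  obtain ⟨ι, hι⟩ := ((LinearMap.ker f).liftQ f le_rfl).exists_leftInverse_of_injective
    ((LinearMap.ker f).ker_liftQ_eq_bot f le_rfl le_rfl)
  refine ⟨(LinearMap.ker f).liftQ g h ∘ₗ ι, LinearMap.ext fun a => ?_⟩
  have hιa : ι (f a) = Submodule.Quotient.mk a := LinearMap.congr_fun hι (Submodule.Quotient.mk a)
  simp [hιa]

theorem exists_sum_smul_eq_of_ker_le {ι κ : Type*} [Fintype ι] [Fintype κ] (c : ι → κ → F)
    (w : ι → M)
    (h : LinearMap.ker (Fintype.linearCombination F c) ≤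
      LinearMap.ker (Fintype.linearCombination F w)) :
    ∃ x : κ → M, ∀ i, ∑ j, c i j • x j = w i := by
  classical
  obtain ⟨ψ, hψ⟩ := LinearMap.exists_comp_eq_of_ker_le _ _ h
  refine ⟨fun j => ψ (Pi.single j 1), fun i => ?_⟩
  have hψi := LinearMap.congr_fun hψ (Pi.single i 1)
  simp only [LinearMap.comp_apply, Fintype.linearCombination_apply_single, one_smul] at hψi
  rw [← hψi]
  conv_rhs => rw [← Finset.univ_sum_single (c i)]
  rw [map_sum]
  refine Finset.sum_congr rfl fun j _ => ?_
  rw [← map_smul, ← Pi.single_smul', smul_eq_mul, mul_one]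

end LinearAlgebra

section Schur

variable {V H : Type*} [AddCommGroup V] [Group H] [DistribMulAction H V]

abbrev equivariantEnd (H V : Type*) [AddCommGroup V] [Group H] [DistribMulAction H V] :
    Subring (AddMonoid.End V) :=
  Subring.centralizer (Set.range (DistribMulAction.toAddMonoidEnd H V))

theorem mem_equivariantEnd {f : AddMonoid.End V} :
    f ∈ equivariantEnd H V ↔ ∀ (h : H) (v : V), f (h • v) = h • f v := by
  rw [Subring.mem_centralizer_iff, Set.forall_mem_range]
  exact forall_congr' fun h => DFunLike.ext_iff.trans (forall_congr' fun v => eq_comm)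

namespace equivariantEnd

theorem apply_smul (f : equivariantEnd H V) (h : H) (v : V) :
    (f : V →+ V) (h • v) = h • (f : V →+ V) v :=
  mem_equivariantEnd.1 f.2 h v

instance : SMulCommClass (equivariantEnd H V) H V :=
  ⟨apply_smul⟩

theorem isUnit_or_eq_zero (hirr : IsIrreducible H V) (f : equivariantEnd H V) :
    IsUnit f ∨ f = 0 := by
  rw [or_iff_not_imp_right]
  intro hf
  have hf' : (f : V →+ V) ≠ 0 := fun h => hf (Subtype.ext h)
  have hker : (f : V →+ V).ker = ⊥ := by
    refine (hirr.2 _ fun h w hw => ?_).resolve_right fun htop => hf' (AddMonoidHom.ext fun v => ?_)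
    · rw [AddMonoidHom.mem_ker] at hw ⊢
      rw [apply_smul, hw, smul_zero]
    · simpa using htop.ge (AddSubgroup.mem_top v)
  have hrange : (f : V →+ V).range = ⊤ := by
    refine (hirr.2 _ ?_).resolve_left fun hbot => hf' (AddMonoidHom.ext fun v => ?_)
    · rintro h _ ⟨w, rfl⟩
      exact ⟨h • w, apply_smul f h w⟩
    · simpa using hbot.le ⟨v, rfl⟩
  let e := AddEquiv.ofBijective (f : V →+ V)
    ⟨(injective_iff_map_eq_zero _).2 fun v hv => by
      simpa using hker.le (AddMonoidHom.mem_ker.2 hv),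
      AddMonoidHom.range_eq_top.1 hrange⟩
  have he : (e.symm.toAddMonoidHom : AddMonoid.End V) ∈ equivariantEnd H V :=
    mem_equivariantEnd.2 fun h v => e.injective <| by
      change e (e.symm (h • v)) = (f : V →+ V) (h • e.symm v)
      rw [apply_smul, e.apply_symm_apply]
      exact congrArg (h • ·) (e.apply_symm_apply v).symm
  exact ⟨⟨f, ⟨_, he⟩, Subtype.ext (AddMonoidHom.ext e.apply_symm_apply),
    Subtype.ext (AddMonoidHom.ext e.symm_apply_apply)⟩, rfl⟩

noncomputable abbrev divisionRing (hirr : IsIrreducible H V) :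
    DivisionRing (equivariantEnd H V) :=
  haveI : Nontrivial (equivariantEnd H V) := ⟨⟨1, 0, fun h10 => hirr.1 <|
    eq_top_iff.2 fun v _ => by simpa using congr(($h10 : AddMonoid.End V) v)⟩⟩
  DivisionRing.ofIsUnitOrEqZero (isUnit_or_eq_zero hirr)

end equivariantEnd

theorem isFSub_toAddSubgroup (Z : Submodule (equivariantEnd H V) V) :
    IsFSub H V Z.toAddSubgroup :=
  fun f hf _ hz => Z.smul_mem ⟨f, mem_equivariantEnd.2 hf⟩ hz

def fixedSubmodule (K : Subgroup H) : Submodule (equivariantEnd H V) V where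
  carrier := {v | ∀ h ∈ K, h • v = v}
  zero_mem' _ _ := smul_zero _
  add_mem' hv hw h hh := by rw [smul_add, hv h hh, hw h hh]
  smul_mem' f v hv h hh := by rw [← smul_comm f h v, hv h hh]

end Schur

section Relations

variable {V H ι κ : Type*} [AddCommGroup V] [Group H] [DistribMulAction H V]
  [DecidableEq κ] (lam : ι → (κ → V) →+[H] V)

def coeff (i : ι) (j : κ) : equivariantEnd H V :=
  ⟨show AddMonoid.End V from (lam i).toAddMonoidHom.comp (AddMonoidHom.single (fun _ : κ => V) j),
    mem_equivariantEnd.2 fun h v => by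
      change lam i (Pi.single j (h • v)) = h • lam i (Pi.single j v)
      rw [Pi.single_smul', map_smul]⟩

theorem apply_eq_sum_coeff_smul [Fintype κ] (i : ι) (x : κ → V) :
    lam i x = ∑ j, coeff lam i j • x j := by
  conv_lhs => rw [← Finset.univ_sum_single x]
  rw [map_sum]
  rfl

variable [Fintype ι]

-- The paper's `Z`: the values at `z` of the left `F`-linear relations among the `lam i`.
def relationSpan (z : ι → V) : Submodule (equivariantEnd H V) V :=
  (LinearMap.ker (Fintype.linearCombination (equivariantEnd H V) (coeff lam))).map
    (Fintype.linearCombination (equivariantEnd H V) z)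

theorem relationSpan_zero : relationSpan lam 0 = ⊥ := by
  rw [relationSpan, eq_bot_iff]
  rintro _ ⟨a, -, rfl⟩
  simp [Fintype.linearCombination_apply]

variable [Fintype κ]

theorem sum_smul_apply_eq (a : ι → equivariantEnd H V) (x : κ → V) :
    ∑ i, a i • lam i x =
      ∑ j, Fintype.linearCombination (equivariantEnd H V) (coeff lam) a j • x j := by
  simp only [apply_eq_sum_coeff_smul, Fintype.linearCombination_apply, Finset.sum_apply,
    Pi.smul_apply, smul_eq_mul, Finset.smul_sum, smul_smul, Finset.sum_smul]
  exact Finset.sum_comm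

variable {lam} in
theorem smul_eq_self_of_mem_relationSpan {z : ι → V} {h : H} {x : κ → V}
    (hx : ∀ i, lam i x = h • z i - z i) {w : V} (hw : w ∈ relationSpan lam z) : h • w = w := by
  obtain ⟨a, ha, rfl⟩ := hw
  rw [SetLike.mem_coe, LinearMap.mem_ker] at ha
  rw [← sub_eq_zero]
  calc h • Fintype.linearCombination _ z a - Fintype.linearCombination _ z a
      = ∑ i, a i • lam i x := by
        simp only [Fintype.linearCombination_apply, Finset.smul_sum, ← Finset.sum_sub_distrib,
          hx, smul_sub, smul_comm (a _) h]
    _ = 0 := by simp [sum_smul_apply_eq, ha]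

theorem exists_forall_apply_smul_sub_eq (hirr : IsIrreducible H V) (z : ι → V) :
    ∃ u : κ → V, ∀ h ∈ fixingSubgroup H (relationSpan lam z : Set V),
      ∀ i, lam i (h • u - u) = h • z i - z i := by
  let _ := equivariantEnd.divisionRing hirr
  set Fix := fixedSubmodule (V := V) (fixingSubgroup H (relationSpan lam z : Set V))
  obtain ⟨x, hx⟩ := exists_sum_smul_eq_of_ker_le (coeff lam) (fun i => Fix.mkQ (z i)) <| by
    intro a ha
    have hmkQ : Fintype.linearCombination _ (fun i => Fix.mkQ (z i)) a =
        Fix.mkQ (Fintype.linearCombination _ z a) := by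
      simp [Fintype.linearCombination_apply]
    rw [LinearMap.mem_ker, hmkQ, Submodule.mkQ_apply, Submodule.Quotient.mk_eq_zero]
    exact fun h hh => (mem_fixingSubgroup_iff H).1 hh _ ⟨a, ha, rfl⟩
  choose u hu using fun j => Submodule.mkQ_surjective Fix (x j)
  refine ⟨u, fun h hh i => ?_⟩
  have hfix : lam i u - z i ∈ Fix := by
    rw [← Submodule.Quotient.eq]
    change Fix.mkQ (lam i u) = Fix.mkQ (z i)
    rw [← hx i, apply_eq_sum_coeff_smul, map_sum]
    simp [hu]
  have hfixed := hfix h hh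
  rw [smul_sub] at hfixed
  rw [map_sub, map_smul]
  exact sub_eq_sub_iff_sub_eq_sub.1 hfixed

theorem exists_forall_apply_eq_iff (hirr : IsIrreducible H V) (z : ι → V) :
    ∃ u : κ → V, ∀ (h : H) (x : κ → V), (∀ i, lam i x = h • z i - z i) ↔
      (∀ i, lam i (x - (h • u - u)) = 0) ∧ h ∈ fixingSubgroup H (relationSpan lam z : Set V) := by
  obtain ⟨u, hu⟩ := exists_forall_apply_smul_sub_eq lam hirr z
  refine ⟨u, fun h x => ⟨fun hx => ?_, fun ⟨hx, hh⟩ i => ?_⟩⟩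
  · have hh : h ∈ fixingSubgroup H (relationSpan lam z : Set V) :=
      (mem_fixingSubgroup_iff H).2 fun w hw => smul_eq_self_of_mem_relationSpan hx hw
    exact ⟨fun i => by rw [map_sub, hx i, hu h hh i, sub_self], hh⟩
  · rw [← hu h hh i, ← sub_eq_zero, ← map_sub]
    exact hx i

end Relations

section MaximalSubmodule

variable {V H : Type*} [AddCommGroup V] [Group H] [DistribMulAction H V] {t : ℕ}
  {W : AddSubgroup (Fin t → V)}

theorem PaperSDP.IsMaxHSub.exists_bijective_mk_single (hirr : IsIrreducible H V)
    (hW : IsMaxHSub H W) :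
    ∃ j, Function.Bijective
      ((QuotientAddGroup.mk' W).comp (AddMonoidHom.single (fun _ : Fin t => V) j)) := by
  obtain ⟨j, v₀, hv₀⟩ : ∃ j v₀, Pi.single j v₀ ∉ W := by
    by_contra! hall
    exact hW.2.1 <| eq_top_iff.2 fun x _ =>
      Finset.univ_sum_single x ▸ AddSubgroup.sum_mem _ fun j _ => hall j (x j)
  set s := AddMonoidHom.single (fun _ : Fin t => V) j
  have hs : ∀ (h : H) v, s (h • v) = h • s v := fun h v => Pi.single_smul' j h v
  have hdisj : W.comap s = ⊥ := by
    refine (hirr.2 _ fun h w hw => ?_).resolve_right fun htop => hv₀ (htop.ge trivial)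
    rw [AddSubgroup.mem_comap, hs]
    exact hW.1 h _ hw
  have hcodisj : W ⊔ s.range = ⊤ := by
    refine hW.2.2 _ (fun h w hw => ?_) (left_lt_sup.2 fun hle => hv₀ (hle ⟨v₀, rfl⟩))
    obtain ⟨a, ha, _, ⟨b, rfl⟩, rfl⟩ := AddSubgroup.mem_sup.1 hw
    rw [smul_add, ← hs]
    exact add_mem (AddSubgroup.mem_sup_left (hW.1 h a ha)) (AddSubgroup.mem_sup_right ⟨_, rfl⟩)
  refine ⟨j, (injective_iff_map_eq_zero _).2 fun v hv => ?_, fun q => ?_⟩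
  · have hv' : v ∈ W.comap s := (QuotientAddGroup.eq_zero_iff (s v)).1 hv
    rwa [hdisj] at hv'
  · obtain ⟨x, rfl⟩ := QuotientAddGroup.mk'_surjective W q
    obtain ⟨w, hw, _, ⟨v, rfl⟩, hx⟩ := AddSubgroup.mem_sup.1 (hcodisj.ge (AddSubgroup.mem_top x))
    exact ⟨v, hx ▸ QuotientAddGroup.eq.2 (by simpa [s] using hw)⟩

theorem PaperSDP.IsMaxHSub.exists_ker_eq (hirr : IsIrreducible H V) (hW : IsMaxHSub H W) :
    ∃ lam : (Fin t → V) →+[H] V, ∀ x, lam x = 0 ↔ x ∈ W := by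
  obtain ⟨j, hj⟩ := hW.exists_bijective_mk_single hirr
  let e := AddEquiv.ofBijective _ hj
  refine ⟨{ e.symm.toAddMonoidHom.comp (QuotientAddGroup.mk' W) with
    map_smul' := fun h x => e.injective ?_ }, fun x => ?_⟩
  · set y := e.symm (x : (Fin t → V) ⧸ W)
    have hy : ((Pi.single j y : Fin t → V) : (Fin t → V) ⧸ W) = x := e.apply_symm_apply _
    change e (e.symm _) = ((Pi.single j (h • y) : Fin t → V) : (Fin t → V) ⧸ W)
    rw [e.apply_symm_apply, Pi.single_smul']
    refine QuotientAddGroup.eq.2 ?_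
    rw [← smul_neg, ← smul_add]
    exact hW.1 h _ (QuotientAddGroup.eq.1 hy.symm)
  · change e.symm _ = 0 ↔ _
    simp [QuotientAddGroup.eq_zero_iff]

end MaximalSubmodule

section SemidirectProduct

variable {V H : Type*} [AddCommGroup V] [Group H] [DistribMulAction H V] {t : ℕ}

theorem phi_apply (h : H) (y : Multiplicative (Fin t → V)) :
    phi V H t h y = Multiplicative.ofAdd (h • Multiplicative.toAdd y) := rfl

theorem phi_symm_apply (h : H) (y : Multiplicative (Fin t → V)) :
    (phi V H t h).symm y = Multiplicative.ofAdd (h⁻¹ • Multiplicative.toAdd y) := rfl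

theorem conj_elemG_inv_inr (u : Fin t → V) (h : H) :
    MulAut.conj (elemG u)⁻¹ (SemidirectProduct.inr h : SDP V H t) =
      ⟨Multiplicative.ofAdd (h • u - u), h⟩ := by
  refine SemidirectProduct.ext ?_ ?_ <;>
    simp [elemG, SemidirectProduct.mul_left, phi_apply, sub_eq_neg_add]

theorem subG_normal {W : AddSubgroup (Fin t → V)} (hW : IsHSub H W) :
    (subG (H := H) W).Normal := by
  constructor
  rintro _ ⟨y, hy, rfl⟩ g
  refine ⟨phi V H t g.right y, hW g.right _ hy, ?_⟩
  refine SemidirectProduct.ext ?_ ?_ <;>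
    simp [SemidirectProduct.mul_left, phi_apply, phi_symm_apply, mul_inv_cancel_comm]

theorem elemG_mul_comm_iff (y : Fin t → V) (g : SDP V H t) :
    elemG y * g = g * elemG y ↔ g.right • y = y := by
  simp [elemG, SemidirectProduct.ext_iff, SemidirectProduct.mul_left, phi_apply,
    mul_comm (Multiplicative.ofAdd y), eq_comm]

theorem mem_subG_sup_map_conj_inr {W : AddSubgroup (Fin t → V)} (hW : IsHSub H W)
    (K : Subgroup H) (u : Fin t → V) (g : SDP V H t) :
    g ∈ subG W ⊔ (K.map SemidirectProduct.inr).map (MulAut.conj (elemG u)⁻¹).toMonoidHom ↔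
      Multiplicative.toAdd g.left - (g.right • u - u) ∈ W ∧ g.right ∈ K := by
  have := subG_normal hW
  rw [Subgroup.mem_sup_of_normal_left]
  simp only [subG, Subgroup.mem_map, MulEquiv.coe_toMonoidHom, exists_exists_and_eq_and,
    conj_elemG_inv_inr, SemidirectProduct.mul_def, SemidirectProduct.left_inl,
    SemidirectProduct.right_inl, map_one, MulAut.one_apply, one_mul]
  constructor
  · rintro ⟨y, hy, h, hh, rfl⟩
    exact ⟨by simpa using hy, hh⟩
  · rintro ⟨hg, hK⟩
    refine ⟨_, hg, g.right, hK, SemidirectProduct.ext ?_ rfl⟩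
    change Multiplicative.ofAdd (Multiplicative.toAdd g.left - (g.right • u - u)) *
      Multiplicative.ofAdd (g.right • u - u) = g.left
    rw [← ofAdd_add, sub_add_cancel, ofAdd_toAdd]

theorem HG_eq_map_conj_inr (u : Fin t → V) :
    HG V H t u =
      ((⊤ : Subgroup H).map SemidirectProduct.inr).map (MulAut.conj (elemG u)⁻¹).toMonoidHom := by
  rw [HG, conjG, MonoidHom.range_eq_map]

theorem CHstar_elemG_inv_eq (u : Fin t → V) (Z : AddSubgroup V) :
    CHstar (elemG u)⁻¹ Z =
      ((fixingSubgroup H ((fun z : V => fun _ : Fin t => z) '' (Z : Set V))).map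
        SemidirectProduct.inr).map (MulAut.conj (elemG u)⁻¹).toMonoidHom := by
  ext g
  simp only [CHstar, Subgroup.mem_inf, Subgroup.mem_map, MonoidHom.mem_range,
    Subgroup.mem_centralizer_iff, Set.forall_mem_image, elemG_mul_comm_iff,
    mem_fixingSubgroup_iff, exists_exists_and_eq_and, exists_exists_eq_and]
  constructor
  · rintro ⟨⟨h, rfl⟩, hfix⟩
    exact ⟨h, by simpa [elemG] using hfix, rfl⟩
  · rintro ⟨h, hh, rfl⟩
    exact ⟨⟨h, rfl⟩, by simpa [elemG] using hh⟩

end SemidirectProduct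

theorem fixingSubgroup_image_const {M α κ : Type*} [Group M] [MulAction M α] [Nonempty κ]
    (s : Set α) : fixingSubgroup M ((fun a : α => fun _ : κ => a) '' s) = fixingSubgroup M s := by
  ext m
  simp only [mem_fixingSubgroup_iff, Set.forall_mem_image, funext_iff, Pi.smul_apply, forall_const]

theorem inter_maximal_supplements_eq_general
    (V H : Type*) [AddCommGroup V] [Group H]
    [DistribMulAction H V]
    (hirr : IsIrreducible H V)
    (t n : ℕ) (W : Fin n → AddSubgroup (Fin t → V)) (v : Fin n → Fin t → V)
    (hW : ∀ i, IsMaxHSub H (W i)) :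
    ∃ (g : SDP V H t) (Z : AddSubgroup V), IsFSub H V Z ∧
      (⨅ i, subG (W i) ⊔ HG V H t (v i)) = subG (⨅ i, W i) ⊔ CHstar g Z := by
  choose lam hlam using fun i => (hW i).exists_ker_eq hirr
  obtain ⟨u, hu⟩ := exists_forall_apply_eq_iff lam hirr fun i => lam i (v i)
  set Z := relationSpan lam fun i => lam i (v i)
  -- For `t = 0` the diagonal embedding `V → V^t` is not injective, but then `Z = 0`.
  have hfix : fixingSubgroup H ((fun a : V => fun _ : Fin t => a) '' (Z : Set V)) =
      fixingSubgroup H (Z : Set V) := by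
    rcases t.eq_zero_or_pos with rfl | ht
    · have hz : (fun i => lam i (v i)) = 0 :=
        funext fun i => (congrArg (lam i) (Subsingleton.elim (v i) 0)).trans (map_zero _)
      ext
      simp [Z, hz, relationSpan_zero, mem_fixingSubgroup_iff, funext_iff]
    · have : Nonempty (Fin t) := ⟨⟨0, ht⟩⟩
      exact fixingSubgroup_image_const _
  have hU : IsHSub H (⨅ i, W i) := fun h w hw =>
    AddSubgroup.mem_iInf.2 fun i => (hW i).1 h w (AddSubgroup.mem_iInf.1 hw i)
  refine ⟨(elemG u)⁻¹, Z.toAddSubgroup, isFSub_toAddSubgroup Z, ?_⟩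
  ext g
  simp only [Subgroup.mem_iInf, HG_eq_map_conj_inr, CHstar_elemG_inv_eq,
    mem_subG_sup_map_conj_inr (hW _).1, mem_subG_sup_map_conj_inr hU, Submodule.coe_toAddSubgroup,
    hfix, Subgroup.mem_top, and_true, AddSubgroup.mem_iInf, ← hlam]
  simpa only [map_sub, map_smul, sub_eq_zero] using hu g.right (Multiplicative.toAdd g.left)

/-- Let `G = V^t ⋊ H` be a finite solvable group with `V` a faithful irreducible
`H`-module, and let `M i = W i · H^{v i}` (`i = 1, …, n`) be maximal subgroups of
`G` supplementing `V^t`, with each `W i` a maximal `H`-submodule of `V^t`.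
Then `⋂ᵢ Mᵢ = U·C_{H*}(Z)`, where `U = ⋂ᵢ Wᵢ`, `H*` is a conjugate of `H` in `G`,
and `Z` is an `End_H(V)`-subspace of `V` (with `V` embedded diagonally in `V^t`). -/
theorem inter_maximal_supplements_eq
    (p : ℕ) (hp : p.Prime) (V H : Type*) [AddCommGroup V] [Group H]
    [DistribMulAction H V] [Finite V] [Finite H] [Group.IsSolvable H]
    (helem : ∀ v : V, p • v = 0)
    (hfaith : IsFaithful H V) (hirr : IsIrreducible H V)
    (t n : ℕ) (W : Fin n → AddSubgroup (Fin t → V)) (v : Fin n → Fin t → V)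
    (hW : ∀ i, IsMaxHSub H (W i)) :
    ∃ (g : SDP V H t) (Z : AddSubgroup V), IsFSub H V Z ∧
      (⨅ i, subG (W i) ⊔ HG V H t (v i)) = subG (⨅ i, W i) ⊔ CHstar g Z :=
  inter_maximal_supplements_eq_general V H hirr t n W v hW
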